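/- Let G be a finite simple graph and I a maximum critical independent set with X = I ∪ N(I). Then every maximum critical independent set S of G is a maximum independent set of the induced subgraph G[X], and S is a critical independent set of G[X]. -/

import Mathlib

open Set

variable {V : Type*} [Fintype V]

/-- `S` is an independent set in `G`: no two of its vertices are adjacent. -/
def IsIndep (G : SimpleGraph V) (S : Set V) : Prop :=
  ∀ u ∈ S, ∀ v ∈ S, ¬ G.Adj u v

/-- The neighborhood `N(X)` of a set of vertices. -/
def nbhd (G : SimpleGraph V) (X : Set V) : Set V := {v | ∃ u ∈ X, G.Adj u v}

/-- The difference `d(X) = |X| - |N(X)|` computed in the induced subgraph `G[W]`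
(neighborhoods are intersected with `W`). -/
noncomputable def dOn (G : SimpleGraph V) (W X : Set V) : ℤ :=
  (X.ncard : ℤ) - ((nbhd G X ∩ W).ncard : ℤ)

/-- The difference `d(X) = |X| - |N(X)|` in `G`. -/
noncomputable def dG (G : SimpleGraph V) (X : Set V) : ℤ := dOn G Set.univ X

/-- `S` is a critical independent set of the induced subgraph `G[W]`:
it is an independent subset of `W` whose difference attains
`max {d(Y) : Y ⊆ W}` (the critical difference of `G[W]`). -/
def IsCritIndepOn (G : SimpleGraph V) (W S : Set V) : Prop :=
  S ⊆ W ∧ IsIndep G S ∧ ∀ Y ⊆ W, dOn G W Y ≤ dOn G W S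

/-- `S` is a critical independent set of `G`. -/
def IsCritIndep (G : SimpleGraph V) (S : Set V) : Prop := IsCritIndepOn G Set.univ S

/-- A maximum critical independent set of `G[W]`: a critical independent set of
largest cardinality. -/
def IsMaxCritIndepOn (G : SimpleGraph V) (W S : Set V) : Prop :=
  IsCritIndepOn G W S ∧ ∀ T, IsCritIndepOn G W T → T.ncard ≤ S.ncard

/-- A maximum critical independent set of `G`. -/
def IsMaxCritIndep (G : SimpleGraph V) (S : Set V) : Prop := IsMaxCritIndepOn G Set.univ S

/-- A maximum independent set of the induced subgraph `G[W]`. -/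
def IsMaxIndepOn (G : SimpleGraph V) (W S : Set V) : Prop :=
  S ⊆ W ∧ IsIndep G S ∧ ∀ T ⊆ W, IsIndep G T → T.ncard ≤ S.ncard

/-- A maximum independent set of `G`. -/
def IsMaxIndep (G : SimpleGraph V) (S : Set V) : Prop := IsMaxIndepOn G Set.univ S

/-- The independence number of the induced subgraph `G[W]`. -/
noncomputable def alphaOn (G : SimpleGraph V) (W : Set V) : ℕ :=
  sSup {n | ∃ S ⊆ W, IsIndep G S ∧ S.ncard = n}

/-- The independence number `α(G)`. -/
noncomputable def alpha (G : SimpleGraph V) : ℕ := alphaOn G Set.univ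

/-- The maximum matching number `μ(G)`. -/
noncomputable def mu (G : SimpleGraph V) : ℕ :=
  sSup {n | ∃ M : G.Subgraph, M.IsMatching ∧ M.edgeSet.ncard = n}

/-- `G` is a König-Egerváry graph: `α(G) + μ(G) = |V(G)|`. -/
def IsKE (G : SimpleGraph V) : Prop := alpha G + mu G = Fintype.card V

/-- `nucleus(G[W])`: intersection of all maximum critical independent sets of `G[W]`. -/
def nucleusOn (G : SimpleGraph V) (W : Set V) : Set V := ⋂₀ {S | IsMaxCritIndepOn G W S}

/-- `nucleus(G)`. -/
def nucleus (G : SimpleGraph V) : Set V := nucleusOn G Set.univ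

/-- `diadem(G[W])`: union of all maximum critical independent sets of `G[W]`. -/
def diademOn (G : SimpleGraph V) (W : Set V) : Set V := ⋃₀ {S | IsMaxCritIndepOn G W S}

/-- `diadem(G)`. -/
def diadem (G : SimpleGraph V) : Set V := diademOn G Set.univ

/-- `ker(G)`: intersection of all critical independent sets of `G`. -/
def kerG (G : SimpleGraph V) : Set V := ⋂₀ {S | IsCritIndep G S}

/-- `core(G)`: intersection of all maximum independent sets of `G`. -/
def core (G : SimpleGraph V) : Set V := ⋂₀ {S | IsMaxIndep G S}

/-- `corona(G)`: union of all maximum independent sets of `G`. -/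
def corona (G : SimpleGraph V) : Set V := ⋃₀ {S | IsMaxIndep G S}


/-!
The key fact is a Hall-type surplus property of a critical set `I`: every `Q ⊆ N(I)` has at
least `|Q|` neighbours in `I`, since otherwise removing `N(Q)` from `I` would raise `d`.
With it, for `X = I ∪ N(I)`:
* if `S` is critical independent, `d(S ∪ I) ≥ d(I)` by supermodularity of `d`, and trading the
  part `S ∩ N(I)` for its neighbours in `I` shows that `I ∪ (S \ N(I))` is critical independent
  too, so maximality of `I` forces `S \ N(I) ⊆ I`, i.e. `S ⊆ X`;
* an independent `T ⊆ X` has `|T ∩ N(I)| ≤ |I \ T|`, so `|T| ≤ |I| = |S|`;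
* any `Y ⊆ X` satisfies `d_X(Y) ≤ d(Y ∩ I) ≤ d(I) = d(S) ≤ d_X(S)`.
-/

namespace CriticalIndependence

variable {V : Type*} {G : SimpleGraph V}

def IsCritical (G : SimpleGraph V) (A : Set V) : Prop := ∀ Y, dG G Y ≤ dG G A

theorem isCritical_of_isCritIndep {A : Set V} (h : IsCritIndep G A) : IsCritical G A :=
  fun Y => h.2.2 Y (subset_univ Y)

theorem nbhd_mono {A B : Set V} (h : A ⊆ B) : nbhd G A ⊆ nbhd G B :=
  fun _ ⟨u, hu, huv⟩ => ⟨u, h hu, huv⟩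

theorem nbhd_union (A B : Set V) : nbhd G (A ∪ B) = nbhd G A ∪ nbhd G B := by
  ext v
  simp only [nbhd, mem_union, mem_ofPred_eq, or_and_right, exists_or]

theorem disjoint_nbhd_of_isIndep {A : Set V} (h : IsIndep G A) : Disjoint A (nbhd G A) :=
  disjoint_left.2 fun v hv ⟨u, hu, huv⟩ => h u hu v hv huv

theorem dG_eq (A : Set V) : dG G A = (A.ncard : ℤ) - ((nbhd G A).ncard : ℤ) := by
  simp [dG, dOn]

theorem dOn_eq (W A : Set V) : dOn G W A = (A.ncard : ℤ) - ((nbhd G A ∩ W).ncard : ℤ) := rfl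

theorem dG_le_dOn [Finite V] (W A : Set V) : dG G A ≤ dOn G W A := by
  have := ncard_le_ncard (inter_subset_left : nbhd G A ∩ W ⊆ nbhd G A)
  rw [dG_eq, dOn_eq]
  omega

theorem dG_add_dG_le_dG_union_add_dG_inter [Finite V] (A B : Set V) :
    dG G A + dG G B ≤ dG G (A ∪ B) + dG G (A ∩ B) := by
  have hN : nbhd G (A ∩ B) ⊆ nbhd G A ∩ nbhd G B :=
    subset_inter (nbhd_mono inter_subset_left) (nbhd_mono inter_subset_right)
  have := ncard_le_ncard hN
  have := ncard_union_add_ncard_inter A B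
  have := ncard_union_add_ncard_inter (nbhd G A) (nbhd G B)
  simp only [dG_eq, nbhd_union]
  omega

theorem ncard_le_ncard_inter_nbhd [Finite V] {I Q : Set V} (hI : IsCritical G I)
    (hQ : Q ⊆ nbhd G I) : Q.ncard ≤ (I ∩ nbhd G Q).ncard := by
  have hN : nbhd G (I \ nbhd G Q) ⊆ nbhd G I \ Q := fun v ⟨u, hu, huv⟩ =>
    ⟨⟨u, hu.1, huv⟩, fun hv => hu.2 ⟨v, hv, huv.symm⟩⟩
  have := ncard_le_ncard hN
  have := ncard_inter_add_ncard_sdiff_eq_ncard I (nbhd G Q)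
  have := ncard_sdiff_add_ncard_of_subset hQ
  have := hI (I \ nbhd G Q)
  rw [dG_eq, dG_eq] at this
  omega

theorem isIndep_union_sdiff_nbhd {I S : Set V} (hI : IsIndep G I) (hS : IsIndep G S) :
    IsIndep G (I ∪ S \ nbhd G I) := by
  rintro u (hu | hu) v (hv | hv) huv
  · exact hI u hu v hv huv
  · exact hv.2 ⟨u, hu, huv⟩
  · exact hu.2 ⟨v, hv, huv.symm⟩
  · exact hS u hu.1 v hv.1 huv

theorem dG_union_le_dG_union_sdiff_nbhd [Finite V] {I : Set V} (hI : IsCritical G I)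
    (hIi : IsIndep G I) (S : Set V) : dG G (I ∪ S) ≤ dG G (I ∪ S \ nbhd G I) := by
  set T := I ∪ S \ nbhd G I
  set Q := S ∩ nbhd G I
  have hQ : Q.ncard ≤ (I ∩ nbhd G Q).ncard := ncard_le_ncard_inter_nbhd hI inter_subset_right
  have hIT : Disjoint I (nbhd G T) := by
    rw [nbhd_union]
    refine disjoint_union_right.2 ⟨disjoint_nbhd_of_isIndep hIi, disjoint_left.2 ?_⟩
    rintro v hv ⟨u, hu, huv⟩
    exact hu.2 ⟨v, hv, huv.symm⟩
  have hsplit : I ∪ S ⊆ T ∪ Q := fun v hv => by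
    by_cases h : v ∈ nbhd G I
    · exact hv.elim (fun hvI => Or.inl (Or.inl hvI)) (fun hvS => Or.inr ⟨hvS, h⟩)
    · exact hv.elim (fun hvI => Or.inl (Or.inl hvI)) (fun hvS => Or.inl (Or.inr ⟨hvS, h⟩))
  have hnbhd : nbhd G T ∪ (I ∩ nbhd G Q) ⊆ nbhd G (I ∪ S) :=
    union_subset (nbhd_mono (union_subset_union_right I sdiff_subset))
      (inter_subset_right.trans (nbhd_mono (inter_subset_left.trans subset_union_right)))
  have := ncard_le_ncard hsplit
  have := ncard_union_le T Q
  have := ncard_le_ncard hnbhd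
  have := ncard_union_eq (hIT.symm.mono_right inter_subset_left :
    Disjoint (nbhd G T) (I ∩ nbhd G Q))
  rw [dG_eq, dG_eq]
  omega

theorem subset_union_nbhd_of_isCritIndep {I S : Set V} [Finite V] (hI : IsMaxCritIndep G I)
    (hS : IsCritIndep G S) : S ⊆ I ∪ nbhd G I := by
  have hIc := isCritical_of_isCritIndep hI.1
  have hSc := isCritical_of_isCritIndep hS
  have hT : IsCritIndep G (I ∪ S \ nbhd G I) := by
    refine ⟨subset_univ _, isIndep_union_sdiff_nbhd hI.1.2.1 hS.2.1, fun Y _ => ?_⟩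
    have := dG_add_dG_le_dG_union_add_dG_inter (G := G) I S
    have := hSc (I ∩ S)
    have := dG_union_le_dG_union_sdiff_nbhd hIc hI.1.2.1 S
    have := hSc I
    have := hIc Y
    change dG G Y ≤ dG G _
    omega
  have hIT : I = I ∪ S \ nbhd G I := eq_of_subset_of_ncard_le subset_union_left (hI.2 _ hT)
  intro v hv
  by_cases h : v ∈ nbhd G I
  · exact Or.inr h
  · exact Or.inl (hIT ▸ Or.inr ⟨hv, h⟩)

theorem ncard_le_of_subset_union_nbhd [Finite V] {I T : Set V} (hI : IsCritical G I)
    (hT : T ⊆ I ∪ nbhd G I) (hTi : IsIndep G T) : T.ncard ≤ I.ncard := by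
  have hTQ : T ⊆ (T ∩ I) ∪ (T ∩ nbhd G I) := fun v hv =>
    (hT hv).elim (fun h => Or.inl ⟨hv, h⟩) (fun h => Or.inr ⟨hv, h⟩)
  have hQ : I ∩ nbhd G (T ∩ nbhd G I) ⊆ I \ (T ∩ I) := fun v ⟨hvI, u, hu, huv⟩ =>
    ⟨hvI, fun hv => hTi u hu.1 v hv.1 huv⟩
  have := ncard_le_ncard_inter_nbhd hI (inter_subset_right : T ∩ nbhd G I ⊆ nbhd G I)
  have := ncard_le_ncard hTQ
  have := ncard_union_le (T ∩ I) (T ∩ nbhd G I)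
  have := ncard_le_ncard hQ
  have := ncard_sdiff_add_ncard_of_subset (inter_subset_right : T ∩ I ⊆ I)
  omega

theorem dOn_union_nbhd_le [Finite V] {I Y : Set V} (hI : IsCritical G I) (hIi : IsIndep G I)
    (hY : Y ⊆ I ∪ nbhd G I) : dOn G (I ∪ nbhd G I) Y ≤ dG G I := by
  set P := Y ∩ I
  set Q := Y ∩ nbhd G I
  have hYPQ : Y ⊆ P ∪ Q := fun v hv =>
    (hY hv).elim (fun h => Or.inl ⟨hv, h⟩) (fun h => Or.inr ⟨hv, h⟩)
  have hNP : nbhd G P ⊆ nbhd G I := nbhd_mono inter_subset_right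
  have hdisj : Disjoint (nbhd G P) (I ∩ nbhd G Q) :=
    ((disjoint_nbhd_of_isIndep hIi).symm.mono_left hNP).mono_right inter_subset_left
  have hnbhd : nbhd G P ∪ (I ∩ nbhd G Q) ⊆ nbhd G Y ∩ (I ∪ nbhd G I) :=
    union_subset (subset_inter (nbhd_mono inter_subset_left) (hNP.trans subset_union_right))
      (subset_inter (inter_subset_right.trans (nbhd_mono inter_subset_left))
        (inter_subset_left.trans subset_union_left))
  have hQ : Q.ncard ≤ (I ∩ nbhd G Q).ncard := ncard_le_ncard_inter_nbhd hI inter_subset_right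
  have := ncard_le_ncard hYPQ
  have := ncard_union_le P Q
  have := ncard_le_ncard hnbhd
  have := ncard_union_eq hdisj
  have := hI P
  rw [dG_eq] at this
  rw [dOn_eq]
  omega

end CriticalIndependence

open CriticalIndependence in
/-- Every maximum critical independent set `S` of `G` is a maximum independent set of
`G[X]` and a critical independent set of `G[X]`, where `X = I ∪ N(I)` for a maximum
critical independent set `I`. -/
theorem stmt19 (G : SimpleGraph V) (I X S : Set V) (hI : IsMaxCritIndep G I)
    (hX : X = I ∪ nbhd G I) (hS : IsMaxCritIndep G S) :
    IsMaxIndepOn G X S ∧ IsCritIndepOn G X S := by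
  subst hX
  have hIc := isCritical_of_isCritIndep hI.1
  have hSc := isCritical_of_isCritIndep hS.1
  have hSX := subset_union_nbhd_of_isCritIndep hI hS.1
  have hcard : S.ncard = I.ncard := le_antisymm (hI.2 S hS.1) (hS.2 I hI.1)
  have hd : dG G I ≤ dG G S := hSc I
  refine ⟨⟨hSX, hS.1.2.1, fun T hT hTi => ?_⟩, hSX, hS.1.2.1, fun Y hY => ?_⟩
  · exact hcard ▸ ncard_le_of_subset_union_nbhd hIc hT hTi
  · exact (dOn_union_nbhd_le hIc hI.1.2.1 hY).trans (hd.trans (dG_le_dOn _ S))
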